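/- Let δ be an initial distribution with support L and σ a strategy of player 1 such that γ₁(δ,σ,τ) = 1 for every strategy τ of player 2 (i.e., σ and δ are almost-surely winning for player 1). Then for every strategy τ, every n ≥ 1 and every play (k₁,c₁,d₁,…,kₙ₊₁) of length n+1 with positive probability under δ, σ, τ: either the support B₁ᵖ(L,c₁,…,cₙ) is almost-surely winning for player 1, or k_m ∈ T for some 1 ≤ m ≤ n. -/

import Mathlib

open scoped Classical

noncomputable section

/-- A probability distribution on a finite type, given by a nonnegative
real-valued density summing to `1`. -/
structure FDist (X : Type*) [Fintype X] where
  f : X → ℝ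
  nonneg : ∀ x, 0 ≤ f x
  sum_one : ∑ x, f x = 1

/-- The support of a distribution: the set of points with positive probability. -/
def FDist.support {X : Type*} [Fintype X] (δ : FDist X) : Finset X :=
  Finset.univ.filter fun x => 0 < δ.f x

/-- The uniform distribution on a nonempty finite set. -/
def uniform {X : Type*} [Fintype X] (L : Finset X) (hL : L.Nonempty) : FDist X where
  f x := if x ∈ L then (L.card : ℝ)⁻¹ else 0
  nonneg x := by split_ifs <;> positivity
  sum_one := by
    rw [Finset.sum_ite_mem, Finset.univ_inter, Finset.sum_const, nsmul_eq_mul,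
      mul_inv_cancel₀]
    exact_mod_cast (Finset.card_pos.mpr hL).ne'

/-- Uniform distribution on `L`, defaulting to the uniform distribution on the
whole type when `L` is empty. -/
def uniformD {X : Type*} [Fintype X] [Nonempty X] (L : Finset X) : FDist X :=
  if h : L.Nonempty then uniform L h else uniform Finset.univ Finset.univ_nonempty

/-- The Dirac distribution on a point. -/
def dirac {X : Type*} [Fintype X] (x : X) : FDist X where
  f y := if y = x then 1 else 0
  nonneg y := by by_cases h : y = x <;> simp [h]
  sum_one := by simp

/-- A stochastic game with partial observation on both sides and a reachability
objective for player 1: states `K`, actions `I`, `J`, signals `C`, `D`, target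
states `T`, transition probabilities `p`, and actions encoded in signals via
`act₁`, `act₂`. -/
structure Game (K I J C D : Type*) [Fintype K] [Fintype I] [Fintype J] [Fintype C] [Fintype D] where
  T : Finset K
  p : K → I → J → C × D × K → ℝ
  p_nonneg : ∀ k i j x, 0 ≤ p k i j x
  p_sum : ∀ k i j, ∑ x : C × D × K, p k i j x = 1
  act₁ : C → I
  act₂ : D → J
  act_compat : ∀ k i j c d l, 0 < p k i j (c, d, l) → i = act₁ c ∧ j = act₂ d

/-- A (behavioral) strategy of player 1: a distribution on actions for each
finite sequence of received signals. -/
abbrev Strategy1 (I C : Type*) [Fintype I] : Type _ := List C → FDist I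

/-- A (behavioral) strategy of player 2. -/
abbrev Strategy2 (J D : Type*) [Fintype J] : Type _ := List D → FDist J

/-- A play with `n+1` states: the initial state followed by `n` steps, each
consisting of a signal for player 1, a signal for player 2 and the next state. -/
structure Hist (K C D : Type*) (n : ℕ) where
  first : K
  steps : Fin n → C × D × K

instance (K C D : Type*) [Fintype K] [Fintype C] [Fintype D] (n : ℕ) :
    Fintype (Hist K C D n) :=
  Fintype.ofEquiv (K × (Fin n → C × D × K))
    { toFun := fun x => ⟨x.1, x.2⟩
      invFun := fun h => (h.first, h.steps)
      left_inv := fun _ => rfl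
      right_inv := fun _ => rfl }

namespace Hist

variable {K C D : Type*}

/-- The last state of a play. -/
def last : ∀ {n : ℕ}, Hist K C D n → K
  | 0, h => h.first
  | n + 1, h => (h.steps (Fin.last n)).2.2

/-- The play obtained by removing the last step. -/
def init {n : ℕ} (h : Hist K C D (n + 1)) : Hist K C D n :=
  ⟨h.first, fun m => h.steps m.castSucc⟩

/-- The `m`-th state of a play, `0`-indexed: `state h 0` is the initial state
(called `k₁` in `1`-indexed notation). -/
def state {n : ℕ} (h : Hist K C D n) (m : Fin (n + 1)) : K :=
  if hm : m.val = 0 then h.first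
  else (h.steps ⟨m.val - 1, by have := m.isLt; omega⟩).2.2

/-- The sequence of signals received by player 1 along the play. -/
def sig1 {n : ℕ} (h : Hist K C D n) : List C := List.ofFn fun m => (h.steps m).1

/-- The sequence of signals received by player 2 along the play. -/
def sig2 {n : ℕ} (h : Hist K C D n) : List D := List.ofFn fun m => (h.steps m).2.1

/-- The play visits the target set `T`. -/
def visits (T : Finset K) {n : ℕ} (h : Hist K C D n) : Prop :=
  ∃ m : Fin (n + 1), h.state m ∈ T

end Hist

namespace Game

variable {K I J C D : Type*} [Fintype K] [Fintype I] [Fintype J] [Fintype C] [Fintype D]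

/-- The probability of a given play of `n` steps, under initial distribution `δ`
and strategies `σ`, `τ`. -/
def playProb (G : Game K I J C D) (δ : FDist K) (σ : Strategy1 I C) (τ : Strategy2 J D) :
    ∀ n : ℕ, Hist K C D n → ℝ
  | 0, h => δ.f h.first
  | n + 1, h =>
      G.playProb δ σ τ n h.init *
        ∑ i : I, ∑ j : J,
          (σ h.init.sig1).f i * (τ h.init.sig2).f j *
            G.p h.init.last i j (h.steps (Fin.last n))

/-- The probability that a play with `n+1` states visits the target set. -/
def reachProb (G : Game K I J C D) (δ : FDist K) (σ : Strategy1 I C)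
    (τ : Strategy2 J D) (n : ℕ) : ℝ :=
  ∑ h : Hist K C D n, if h.visits G.T then G.playProb δ σ τ n h else 0

/-- The reachability probability `γ₁(δ,σ,τ)`: the supremum over horizons of the
probability that the play visits the target set. -/
def val (G : Game K I J C D) (δ : FDist K) (σ : Strategy1 I C) (τ : Strategy2 J D) : ℝ :=
  ⨆ n : ℕ, G.reachProb δ σ τ n

/-- `δ` is almost-surely winning for player 1. -/
def AlmostSureWin1 (G : Game K I J C D) (δ : FDist K) : Prop :=
  ∃ σ, ∀ τ, G.val δ σ τ = 1

/-- `δ` is positively winning for player 1. -/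
def PositiveWin1 (G : Game K I J C D) (δ : FDist K) : Prop :=
  ∃ σ, ∀ τ, 0 < G.val δ σ τ

/-- `δ` is positively winning for player 2. -/
def PositiveWin2 (G : Game K I J C D) (δ : FDist K) : Prop :=
  ∃ τ, ∀ σ, G.val δ σ τ < 1

/-- `δ` is surely (equivalently here, almost-surely) winning for player 2. -/
def SureWin2 (G : Game K I J C D) (δ : FDist K) : Prop :=
  ∃ τ, ∀ σ, G.val δ σ τ = 0

/-- One-step belief operator of player 1. -/
def B1 (G : Game K I J C D) (L : Finset K) (c : C) : Finset K :=
  Finset.univ.filter fun k => ∃ l ∈ L, ∃ d : D, 0 < G.p l (G.act₁ c) (G.act₂ d) (c, d, k)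

/-- One-step belief operator of player 2. -/
def B2 (G : Game K I J C D) (L : Finset K) (d : D) : Finset K :=
  Finset.univ.filter fun k => ∃ l ∈ L, ∃ c : C, 0 < G.p l (G.act₁ c) (G.act₂ d) (c, d, k)

/-- Belief of player 1 after a sequence of signals. -/
def B1seq (G : Game K I J C D) (L : Finset K) (cs : List C) : Finset K := cs.foldl G.B1 L

/-- Belief of player 2 after a sequence of signals. -/
def B2seq (G : Game K I J C D) (L : Finset K) (ds : List D) : Finset K := ds.foldl G.B2 L

/-- One-step pessimistic belief operator of player 1. -/
def B1p (G : Game K I J C D) (L : Finset K) (c : C) : Finset K := G.B1 (L \ G.T) c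

/-- One-step pessimistic belief operator of player 2. -/
def B2p (G : Game K I J C D) (L : Finset K) (d : D) : Finset K := G.B2 (L \ G.T) d

/-- Pessimistic belief of player 1 after a sequence of signals. -/
def B1pseq (G : Game K I J C D) (L : Finset K) (cs : List C) : Finset K := cs.foldl G.B1p L

/-- Pessimistic belief of player 2 after a sequence of signals. -/
def B2pseq (G : Game K I J C D) (L : Finset K) (ds : List D) : Finset K := ds.foldl G.B2p L

/-- The operator `Φ` on collections of subsets of `K ∖ T`. -/
def Phi (G : Game K I J C D) (𝓛 : Set (Finset K)) : Set (Finset K) :=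
  {L | L ∈ 𝓛 ∧ L ∩ G.T = ∅ ∧ ∃ j : J, ∀ d : D, G.act₂ d = j → G.B2 L d ∈ 𝓛}

theorem Phi_mono (G : Game K I J C D) : Monotone G.Phi := by
  intro A B hAB L hL
  obtain ⟨h1, h2, j, hj⟩ := hL
  exact ⟨hAB h1, h2, j, fun d hd => hAB (hj d hd)⟩

/-- `𝓛_∞`, the greatest fixpoint of `Φ`. -/
def Linf (G : Game K I J C D) : Set (Finset K) :=
  OrderHom.gfp ⟨G.Phi, G.Phi_mono⟩

/-- The winning condition of the `𝓛`-game for player 1, on a play with initial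
support `L`: some state `k_m` is a target state and all earlier pessimistic
beliefs of player 1 avoid `𝓛`. -/
def LWin (G : Game K I J C D) (𝓛 : Set (Finset K)) (L : Finset K) {n : ℕ}
    (h : Hist K C D n) : Prop :=
  ∃ m : Fin (n + 1), h.state m ∈ G.T ∧
    ∀ r : ℕ, 1 ≤ r → r ≤ m.val → G.B1pseq L (h.sig1.take r) ∉ 𝓛

/-- The payoff `γ₁^𝓛(δ,σ,τ)` of player 1 in the `𝓛`-game, for an initial
distribution `δ` with support `L`. -/
def Lval (G : Game K I J C D) (𝓛 : Set (Finset K)) (L : Finset K) (δ : FDist K)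
    (σ : Strategy1 I C) (τ : Strategy2 J D) : ℝ :=
  ⨆ n : ℕ, ∑ h : Hist K C D n, if G.LWin 𝓛 L h then G.playProb δ σ τ n h else 0

end Game

/-- The uniformly random strategy `σ_R` of player 1. -/
def randomStrat (I C : Type*) [Fintype I] [Nonempty I] : Strategy1 I C :=
  fun _ => uniform Finset.univ Finset.univ_nonempty
variable {K I J C D : Type*} [Fintype K] [Fintype I] [Fintype J] [Fintype C] [Fintype D]
  [Nonempty K] [Nonempty I] [Nonempty J] [Nonempty C] [Nonempty D]


/-!
The argument is an induction along the play, whose step is the case of a single signal.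
Suppose `σ` wins almost surely from `δ` and plays `act₁ c` with positive probability at
the first step. Given a strategy `τ` of player 2, let player 2 play uniformly at random at the
first step and then `τ`. Every state of `B₁ᵖ(supp δ, c)` is then reached with the signal `c`
from a non-target state with probability at least some `ε > 0`, so the probability that the
continuation `shift1 σ [c]` avoids `T` for `n` steps from the uniform distribution on
`B₁ᵖ(supp δ, c)` is at most a constant times the probability that `σ` avoids `T` for `n + 1`
steps from `δ`, which tends to `0`. The current state always lies in the pessimistic belief,
which keeps the induction going.
-/

attribute [ext] Hist

namespace Hist

variable {K C D : Type*} {n : ℕ}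

def snoc (g : Hist K C D n) (x : C × D × K) : Hist K C D (n + 1) :=
  ⟨g.first, Fin.snoc g.steps x⟩

def cons (k : K) (c : C) (d : D) (g : Hist K C D n) : Hist K C D (n + 1) :=
  ⟨k, Fin.cons (c, d, g.first) g.steps⟩

def tail (h : Hist K C D (n + 1)) : Hist K C D n :=
  ⟨(h.steps 0).2.2, Fin.tail h.steps⟩

theorem state_eq_cons (h : Hist K C D n) :
    h.state = Fin.cons h.first fun m => (h.steps m).2.2 := by
  funext m
  cases m using Fin.cases with
  | zero => simp [state]
  | succ m => simp [state]

@[simp] theorem state_zero (h : Hist K C D n) : h.state 0 = h.first := by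
  simp [state_eq_cons]

@[simp] theorem state_succ (h : Hist K C D n) (m : Fin n) : h.state m.succ = (h.steps m).2.2 := by
  simp [state_eq_cons]

theorem state_init (h : Hist K C D (n + 1)) (m : Fin (n + 1)) :
    h.init.state m = h.state m.castSucc := by
  cases m using Fin.cases with
  | zero => simp [init]
  | succ m => simp [init]

theorem last_eq_state (h : Hist K C D n) : h.last = h.state (Fin.last n) := by
  cases n with
  | zero => simp [last]
  | succ n => simp [last, ← Fin.succ_last]

@[simp] theorem init_snoc (g : Hist K C D n) (x : C × D × K) : (g.snoc x).init = g := by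
  ext1
  · rfl
  · exact Fin.init_snoc (α := fun _ => C × D × K) x g.steps

@[simp] theorem snoc_steps_last (g : Hist K C D n) (x : C × D × K) :
    (g.snoc x).steps (Fin.last n) = x :=
  Fin.snoc_last (α := fun _ => C × D × K) x g.steps

theorem snoc_init_self (h : Hist K C D (n + 1)) : h.init.snoc (h.steps (Fin.last n)) = h := by
  ext1
  · rfl
  · exact Fin.snoc_init_self h.steps

theorem visits_snoc {T : Finset K} {g : Hist K C D n} (x : C × D × K) (hg : g.visits T) :
    (g.snoc x).visits T := by
  obtain ⟨m, hm⟩ := hg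
  exact ⟨m.castSucc, by rwa [← state_init, init_snoc]⟩

theorem sig1_snoc (g : Hist K C D n) (x : C × D × K) : (g.snoc x).sig1 = g.sig1 ++ [x.1] := by
  rw [sig1, List.ofFn_succ']
  simp [sig1, snoc]

theorem sig1_eq_init_append (h : Hist K C D (n + 1)) :
    h.sig1 = h.init.sig1 ++ [(h.steps (Fin.last n)).1] := by
  conv_lhs => rw [← snoc_init_self h]
  exact sig1_snoc _ _

theorem cons_tail_self (h : Hist K C D (n + 1)) :
    cons h.first (h.steps 0).1 (h.steps 0).2.1 h.tail = h := by
  ext1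
  · rfl
  · exact Fin.cons_self_tail h.steps

theorem visits_cons {T : Finset K} (k : K) (c : C) (d : D) (g : Hist K C D n) :
    (cons k c d g).visits T ↔ k ∈ T ∨ g.visits T := by
  simp only [visits, Fin.exists_fin_succ, state_eq_cons]
  simp [cons]

theorem sig1_cons (k : K) (c : C) (d : D) (g : Hist K C D n) :
    (cons k c d g).sig1 = c :: g.sig1 := by
  simp [sig1, cons, List.ofFn_succ]

theorem sig2_cons (k : K) (c : C) (d : D) (g : Hist K C D n) :
    (cons k c d g).sig2 = d :: g.sig2 := by
  simp [sig2, cons, List.ofFn_succ]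

theorem init_cons (k : K) (c : C) (d : D) (g : Hist K C D (n + 1)) :
    (cons k c d g).init = cons k c d g.init := by
  ext1
  · rfl
  · funext m
    cases m using Fin.cases with
    | zero => rfl
    | succ m => simp [init, cons]

theorem last_cons (k : K) (c : C) (d : D) (g : Hist K C D n) : (cons k c d g).last = g.last := by
  cases n with
  | zero => rfl
  | succ n => simp [last, cons, ← Fin.succ_last]

theorem cons_steps_last (k : K) (c : C) (d : D) (g : Hist K C D (n + 1)) :
    (cons k c d g).steps (Fin.last (n + 1)) = g.steps (Fin.last n) := by
  simp [cons, ← Fin.succ_last]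

def zeroEquiv (K C D : Type*) : Hist K C D 0 ≃ K where
  toFun h := h.first
  invFun k := ⟨k, Fin.elim0⟩
  left_inv _ := Hist.ext rfl (funext fun m => m.elim0)
  right_inv _ := rfl

def snocEquiv (K C D : Type*) (n : ℕ) : Hist K C D (n + 1) ≃ Hist K C D n × (C × D × K) where
  toFun h := (h.init, h.steps (Fin.last n))
  invFun p := p.1.snoc p.2
  left_inv := snoc_init_self
  right_inv _ := by simp

def consEquiv (K C D : Type*) (n : ℕ) : Hist K C D (n + 1) ≃ C × D × K × Hist K C D n where
  toFun h := ((h.steps 0).1, (h.steps 0).2.1, h.first, h.tail)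
  invFun p := cons p.2.2.1 p.1 p.2.1 p.2.2.2
  left_inv := cons_tail_self
  right_inv _ := rfl

@[simp] theorem consEquiv_symm_apply (p : C × D × K × Hist K C D n) :
    (consEquiv K C D n).symm p = cons p.2.2.1 p.1 p.2.1 p.2.2.2 := rfl

end Hist

namespace FDist

variable {X : Type*} [Fintype X]

theorem mem_support {δ : FDist X} {x : X} : x ∈ δ.support ↔ 0 < δ.f x := by
  simp [FDist.support]

theorem support_nonempty (δ : FDist X) : δ.support.Nonempty := by
  by_contra hempty
  have hzero : ∀ x, δ.f x = 0 := fun x =>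
    le_antisymm (not_lt.mp fun hx => hempty ⟨x, mem_support.mpr hx⟩) (δ.nonneg x)
  simpa [hzero] using δ.sum_one

theorem exists_le_mul_of_support {w : X → ℝ} (δ : FDist X) (hw : ∀ x, 0 ≤ w x)
    (hsupp : ∀ x ∈ δ.support, 0 < w x) : ∃ c > 0, ∀ x, δ.f x ≤ c * w x := by
  have hratio : ∀ x, 0 ≤ δ.f x / w x := fun x => div_nonneg (δ.nonneg x) (hw x)
  have hsum : 0 ≤ ∑ x, δ.f x / w x := Finset.sum_nonneg fun x _ => hratio x
  refine ⟨1 + ∑ x, δ.f x / w x, by linarith, fun x => ?_⟩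
  rcases (δ.nonneg x).eq_or_lt with hx | hx
  · rw [← hx]
    exact mul_nonneg (by linarith) (hw x)
  · have hwx := hsupp x (mem_support.mpr hx)
    calc δ.f x = δ.f x / w x * w x := by field_simp
      _ ≤ (1 + ∑ x, δ.f x / w x) * w x := by
        gcongr
        exact (Finset.single_le_sum (fun y _ => hratio y) (Finset.mem_univ x)).trans
          (le_add_of_nonneg_left zero_le_one)

end FDist

theorem support_uniformD {X : Type*} [Fintype X] [Nonempty X] {L : Finset X}
    (hL : L.Nonempty) : (uniformD L).support = L := by
  ext x
  by_cases hx : x ∈ L <;> simp [FDist.mem_support, uniformD, hL, uniform, hx]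

def shift1 {I C : Type*} [Fintype I] (σ : Strategy1 I C) (cs : List C) : Strategy1 I C :=
  fun xs => σ (cs ++ xs)

def shift2 {J D : Type*} [Fintype J] (τ : Strategy2 J D) (ds : List D) : Strategy2 J D :=
  fun xs => τ (ds ++ xs)

theorem shift1_append {I C : Type*} [Fintype I] (σ : Strategy1 I C) (cs : List C) (c : C) :
    shift1 σ (cs ++ [c]) = shift1 (shift1 σ cs) [c] := by
  funext xs
  simp [shift1]

def uniformThen {J D : Type*} [Fintype J] [Nonempty J] (τ : Strategy2 J D) : Strategy2 J D
  | [] => uniform Finset.univ Finset.univ_nonempty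
  | _ :: ds => τ ds

namespace Game

open Hist

variable {K I J C D : Type*} [Fintype K] [Fintype I] [Fintype J] [Fintype C] [Fintype D]
  (G : Game K I J C D)

def transProb (α : FDist I) (β : FDist J) (k : K) (x : C × D × K) : ℝ :=
  ∑ i, ∑ j, α.f i * β.f j * G.p k i j x

theorem transProb_nonneg (α : FDist I) (β : FDist J) (k : K) (x : C × D × K) :
    0 ≤ G.transProb α β k x :=
  Finset.sum_nonneg fun _ _ => Finset.sum_nonneg fun _ _ =>
    mul_nonneg (mul_nonneg (α.nonneg _) (β.nonneg _)) (G.p_nonneg _ _ _ _)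

theorem sum_transProb (α : FDist I) (β : FDist J) (k : K) : ∑ x, G.transProb α β k x = 1 := by
  simp only [transProb, Finset.sum_comm (s := Finset.univ (α := C × D × K)), ← Finset.mul_sum,
    G.p_sum, mul_one, α.sum_one, β.sum_one]

theorem transProb_pos_iff {α : FDist I} {β : FDist J} {k : K} {x : C × D × K} :
    0 < G.transProb α β k x ↔ ∃ i j, 0 < α.f i ∧ 0 < β.f j ∧ 0 < G.p k i j x := by
  have hterm : ∀ i j, 0 ≤ α.f i * β.f j * G.p k i j x := fun i j =>
    mul_nonneg (mul_nonneg (α.nonneg i) (β.nonneg j)) (G.p_nonneg _ _ _ _)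
  simp only [transProb, Finset.mem_univ, true_and,
    Finset.sum_pos_iff_of_nonneg fun i _ => Finset.sum_nonneg fun j _ => hterm i j,
    Finset.sum_pos_iff_of_nonneg fun j _ => hterm _ j]
  refine exists_congr fun i => exists_congr fun j => ?_
  simp only [(hterm i j).lt_iff_ne', mul_ne_zero_iff, (α.nonneg i).lt_iff_ne',
    (β.nonneg j).lt_iff_ne', (G.p_nonneg k i j x).lt_iff_ne', and_assoc]

theorem playProb_succ (δ : FDist K) (σ : Strategy1 I C) (τ : Strategy2 J D) {n : ℕ}
    (h : Hist K C D (n + 1)) :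
    G.playProb δ σ τ (n + 1) h = G.playProb δ σ τ n h.init *
      G.transProb (σ h.init.sig1) (τ h.init.sig2) h.init.last (h.steps (Fin.last n)) := rfl

theorem playProb_snoc (δ : FDist K) (σ : Strategy1 I C) (τ : Strategy2 J D) {n : ℕ}
    (g : Hist K C D n) (x : C × D × K) :
    G.playProb δ σ τ (n + 1) (g.snoc x) =
      G.playProb δ σ τ n g * G.transProb (σ g.sig1) (τ g.sig2) g.last x := by
  rw [playProb_succ, init_snoc, snoc_steps_last]

theorem playProb_nonneg (δ : FDist K) (σ : Strategy1 I C) (τ : Strategy2 J D) :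
    ∀ (n : ℕ) (h : Hist K C D n), 0 ≤ G.playProb δ σ τ n h
  | 0, h => δ.nonneg h.first
  | n + 1, h => mul_nonneg (playProb_nonneg δ σ τ n h.init) (G.transProb_nonneg _ _ _ _)

theorem sum_playProb (δ : FDist K) (σ : Strategy1 I C) (τ : Strategy2 J D) :
    ∀ n : ℕ, ∑ h : Hist K C D n, G.playProb δ σ τ n h = 1
  | 0 => ((zeroEquiv K C D).sum_comp δ.f).trans δ.sum_one
  | n + 1 => by
    rw [← (snocEquiv K C D n).symm.sum_comp, Fintype.sum_prod_type]
    simp only [snocEquiv, Equiv.coe_fn_symm_mk, playProb_snoc, ← Finset.mul_sum,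
      sum_transProb, mul_one]
    exact sum_playProb δ σ τ n

theorem playProb_eq_mul_playProb_dirac (δ : FDist K) (σ : Strategy1 I C) (τ : Strategy2 J D) :
    ∀ (n : ℕ) (h : Hist K C D n),
      G.playProb δ σ τ n h = δ.f h.first * G.playProb (dirac h.first) σ τ n h
  | 0, h => by simp [playProb, dirac]
  | n + 1, h => by
    rw [playProb_succ, playProb_succ, playProb_eq_mul_playProb_dirac δ σ τ n h.init]
    simp only [init, mul_assoc]

theorem playProb_cons (δ : FDist K) (σ : Strategy1 I C) (τ : Strategy2 J D) :
    ∀ (n : ℕ) (k : K) (c : C) (d : D) (g : Hist K C D n),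
      G.playProb δ σ τ (n + 1) (cons k c d g) =
        δ.f k * G.transProb (σ []) (τ []) k (c, d, g.first) *
          G.playProb (dirac g.first) (shift1 σ [c]) (shift2 τ [d]) n g
  | 0, k, c, d, g => by
    simp [playProb, transProb, dirac, init, sig1, sig2, last, cons]
  | n + 1, k, c, d, g => by
    rw [playProb_succ, init_cons, cons_steps_last, playProb_cons δ σ τ n,
      playProb_succ _ (dirac _), sig1_cons, sig2_cons, last_cons]
    simp only [init, mul_assoc]
    rfl

def avoidProb (δ : FDist K) (σ : Strategy1 I C) (τ : Strategy2 J D) (n : ℕ) : ℝ :=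
  ∑ h : Hist K C D n, if h.visits G.T then 0 else G.playProb δ σ τ n h

theorem avoidProb_nonneg (δ : FDist K) (σ : Strategy1 I C) (τ : Strategy2 J D) (n : ℕ) :
    0 ≤ G.avoidProb δ σ τ n :=
  Finset.sum_nonneg fun h _ => by split_ifs <;> simp [G.playProb_nonneg]

theorem reachProb_add_avoidProb (δ : FDist K) (σ : Strategy1 I C) (τ : Strategy2 J D) (n : ℕ) :
    G.reachProb δ σ τ n + G.avoidProb δ σ τ n = 1 := by
  rw [reachProb, avoidProb, ← Finset.sum_add_distrib, ← G.sum_playProb δ σ τ n]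
  exact Finset.sum_congr rfl fun h _ => by split_ifs <;> simp

theorem avoidProb_succ_le (δ : FDist K) (σ : Strategy1 I C) (τ : Strategy2 J D) (n : ℕ) :
    G.avoidProb δ σ τ (n + 1) ≤ G.avoidProb δ σ τ n := by
  rw [avoidProb, avoidProb, ← (snocEquiv K C D n).symm.sum_comp, Fintype.sum_prod_type]
  refine Finset.sum_le_sum fun g _ => ?_
  simp only [snocEquiv, Equiv.coe_fn_symm_mk, playProb_snoc]
  split_ifs with hg
  · exact Finset.sum_nonpos fun x _ => by simp [visits_snoc x hg]
  · calc _ ≤ ∑ x, G.playProb δ σ τ n g * G.transProb (σ g.sig1) (τ g.sig2) g.last x :=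
          Finset.sum_le_sum fun x _ => by
            split_ifs
            exacts [mul_nonneg (G.playProb_nonneg _ _ _ _ _) (G.transProb_nonneg _ _ _ _), le_rfl]
      _ = G.playProb δ σ τ n g := by rw [← Finset.mul_sum, sum_transProb, mul_one]

theorem val_eq_one_iff (δ : FDist K) (σ : Strategy1 I C) (τ : Strategy2 J D) :
    G.val δ σ τ = 1 ↔ ∀ η > 0, ∃ n, G.avoidProb δ σ τ n < η := by
  have hreach : ∀ n, G.reachProb δ σ τ n = 1 - G.avoidProb δ σ τ n := fun n => by
    linarith [G.reachProb_add_avoidProb δ σ τ n]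
  have hle : G.val δ σ τ ≤ 1 :=
    ciSup_le fun n => by linarith [hreach n, G.avoidProb_nonneg δ σ τ n]
  constructor
  · intro hval η hη
    by_contra! hbig
    have : G.val δ σ τ ≤ 1 - η := ciSup_le fun n => by linarith [hreach n, hbig n]
    linarith
  · intro hsmall
    refine le_antisymm hle (le_of_forall_sub_le fun η hη => ?_)
    obtain ⟨n, hn⟩ := hsmall η hη
    have hbdd : BddAbove (Set.range (G.reachProb δ σ τ)) :=
      ⟨1, by rintro _ ⟨m, rfl⟩; linarith [hreach m, G.avoidProb_nonneg δ σ τ m]⟩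
    have : G.reachProb δ σ τ n ≤ G.val δ σ τ := le_ciSup hbdd n
    linarith [hreach n]

theorem val_eq_one_of_avoidProb_le_mul {δ δ' : FDist K} {σ σ' : Strategy1 I C}
    {τ τ' : Strategy2 J D} (hval : G.val δ σ τ = 1) {c : ℝ} (hc : 0 < c)
    (hle : ∀ n, G.avoidProb δ' σ' τ' n ≤ c * G.avoidProb δ σ τ n) : G.val δ' σ' τ' = 1 := by
  rw [val_eq_one_iff] at hval ⊢
  intro η hη
  obtain ⟨n, hn⟩ := hval (η / c) (by positivity)
  exact ⟨n, (hle n).trans_lt (by rwa [lt_div_iff₀' hc] at hn)⟩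

def weightedAvoidProb (w : K → ℝ) (σ : Strategy1 I C) (τ : Strategy2 J D) (n : ℕ) : ℝ :=
  ∑ h : Hist K C D n, w h.first * if h.visits G.T then 0 else G.playProb (dirac h.first) σ τ n h

theorem avoidProb_eq_weightedAvoidProb (δ : FDist K) (σ : Strategy1 I C) (τ : Strategy2 J D)
    (n : ℕ) : G.avoidProb δ σ τ n = G.weightedAvoidProb δ.f σ τ n :=
  Finset.sum_congr rfl fun h _ => by
    split_ifs
    · simp
    · exact G.playProb_eq_mul_playProb_dirac δ σ τ n h

theorem weightedAvoidProb_le_mul {w w' : K → ℝ} {c : ℝ} (hw : ∀ k, w k ≤ c * w' k)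
    (σ : Strategy1 I C) (τ : Strategy2 J D) (n : ℕ) :
    G.weightedAvoidProb w σ τ n ≤ c * G.weightedAvoidProb w' σ τ n := by
  rw [weightedAvoidProb, weightedAvoidProb, Finset.mul_sum]
  refine Finset.sum_le_sum fun h _ => ?_
  rw [← mul_assoc]
  refine mul_le_mul_of_nonneg_right (hw _) ?_
  split_ifs
  exacts [le_rfl, G.playProb_nonneg _ _ _ _ _]

theorem weightedAvoidProb_nonneg {w : K → ℝ} (hw : ∀ k, 0 ≤ w k) (σ : Strategy1 I C)
    (τ : Strategy2 J D) (n : ℕ) : 0 ≤ G.weightedAvoidProb w σ τ n := by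
  refine Finset.sum_nonneg fun h _ => mul_nonneg (hw _) ?_
  split_ifs
  exacts [le_rfl, G.playProb_nonneg _ _ _ _ _]

theorem weightedAvoidProb_sum {ι : Type*} (s : Finset ι) (w : ι → K → ℝ) (σ : Strategy1 I C)
    (τ : Strategy2 J D) (n : ℕ) :
    G.weightedAvoidProb (fun k => ∑ i ∈ s, w i k) σ τ n =
      ∑ i ∈ s, G.weightedAvoidProb (w i) σ τ n := by
  simp only [weightedAvoidProb, Finset.sum_mul]
  exact Finset.sum_comm

def firstStepWeight (δ : FDist K) (σ : Strategy1 I C) (τ : Strategy2 J D) (c : C) (d : D)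
    (l : K) : ℝ :=
  ∑ k ∈ Finset.univ.filter (· ∉ G.T), δ.f k * G.transProb (σ []) (τ []) k (c, d, l)

theorem firstStepWeight_nonneg (δ : FDist K) (σ : Strategy1 I C) (τ : Strategy2 J D) (c : C)
    (d : D) (l : K) : 0 ≤ G.firstStepWeight δ σ τ c d l :=
  Finset.sum_nonneg fun k _ => mul_nonneg (δ.nonneg k) (G.transProb_nonneg _ _ _ _)

theorem avoidProb_succ (δ : FDist K) (σ : Strategy1 I C) (τ : Strategy2 J D) (n : ℕ) :
    G.avoidProb δ σ τ (n + 1) = ∑ c, ∑ d,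
      G.weightedAvoidProb (G.firstStepWeight δ σ τ c d) (shift1 σ [c]) (shift2 τ [d]) n := by
  rw [avoidProb, ← (consEquiv K C D n).symm.sum_comp]
  simp only [Fintype.sum_prod_type, consEquiv_symm_apply, weightedAvoidProb,
    firstStepWeight, Finset.sum_mul, Finset.sum_filter]
  refine Finset.sum_congr rfl fun c _ => Finset.sum_congr rfl fun d _ => ?_
  rw [Finset.sum_comm]
  refine Finset.sum_congr rfl fun g _ => Finset.sum_congr rfl fun k _ => ?_
  rw [playProb_cons]
  by_cases hk : k ∈ G.T <;> by_cases hg : g.visits G.T <;> simp [visits_cons, hk, hg, mul_assoc]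

theorem mem_B1p {L : Finset K} {c : C} {l : K} :
    l ∈ G.B1p L c ↔ ∃ k ∈ L \ G.T, ∃ d, 0 < G.p k (G.act₁ c) (G.act₂ d) (c, d, l) := by
  simp [B1p, B1]

theorem mem_B1p_of_transProb_pos {L : Finset K} {α : FDist I} {β : FDist J} {k l : K} {c : C}
    {d : D} (hk : k ∈ L) (hkT : k ∉ G.T) (hpos : 0 < G.transProb α β k (c, d, l)) :
    l ∈ G.B1p L c ∧ 0 < α.f (G.act₁ c) := by
  obtain ⟨i, j, hi, -, hp⟩ := G.transProb_pos_iff.mp hpos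
  obtain ⟨rfl, rfl⟩ := G.act_compat k i j c d l hp
  exact ⟨G.mem_B1p.mpr ⟨k, Finset.mem_sdiff.mpr ⟨hk, hkT⟩, d, hp⟩, hi⟩

theorem B1pseq_append (L : Finset K) (cs : List C) (c : C) :
    G.B1pseq L (cs ++ [c]) = G.B1p (G.B1pseq L cs) c :=
  List.foldl_append ..

theorem sum_firstStepWeight_uniformThen_pos [Nonempty J] {δ : FDist K} {σ : Strategy1 I C}
    (τ : Strategy2 J D) {c : C} (hc : 0 < (σ []).f (G.act₁ c)) {l : K}
    (hl : l ∈ G.B1p δ.support c) : 0 < ∑ d, G.firstStepWeight δ σ (uniformThen τ) c d l := by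
  obtain ⟨k, hk, d, hp⟩ := G.mem_B1p.mp hl
  obtain ⟨hkδ, hkT⟩ := Finset.mem_sdiff.mp hk
  have hd : 0 < (uniformThen τ []).f (G.act₂ d) := by
    simp [uniformThen, uniform, Fintype.card_pos]
  have hweight : 0 < G.firstStepWeight δ σ (uniformThen τ) c d l :=
    Finset.sum_pos' (fun k _ => mul_nonneg (δ.nonneg k) (G.transProb_nonneg _ _ _ _))
      ⟨k, by simpa using hkT, mul_pos (FDist.mem_support.mp hkδ)
        (G.transProb_pos_iff.mpr ⟨_, _, hc, hd, hp⟩)⟩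
  exact Finset.sum_pos' (fun d _ => G.firstStepWeight_nonneg δ σ _ c d l)
    ⟨d, Finset.mem_univ d, hweight⟩

def WinsAlmostSurely (δ : FDist K) (σ : Strategy1 I C) : Prop :=
  ∀ τ : Strategy2 J D, G.val δ σ τ = 1

variable {G}

theorem WinsAlmostSurely.of_support_subset {δ δ' : FDist K} {σ : Strategy1 I C}
    (h : G.WinsAlmostSurely δ σ) (hsub : δ'.support ⊆ δ.support) : G.WinsAlmostSurely δ' σ := by
  intro τ
  obtain ⟨c, hc, hle⟩ :=
    δ'.exists_le_mul_of_support δ.nonneg fun k hk => FDist.mem_support.mp (hsub hk)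
  refine G.val_eq_one_of_avoidProb_le_mul (h τ) hc fun n => ?_
  simp only [avoidProb_eq_weightedAvoidProb]
  exact G.weightedAvoidProb_le_mul hle σ τ n

theorem WinsAlmostSurely.shift1_B1p [Nonempty K] [Nonempty J] {δ : FDist K}
    {σ : Strategy1 I C} (h : G.WinsAlmostSurely δ σ) {c : C} (hc : 0 < (σ []).f (G.act₁ c))
    (hne : (G.B1p δ.support c).Nonempty) :
    G.WinsAlmostSurely (uniformD (G.B1p δ.support c)) (shift1 σ [c]) := by
  intro τ
  set w : K → ℝ := fun l => ∑ d, G.firstStepWeight δ σ (uniformThen τ) c d l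
  obtain ⟨M, hM, hle⟩ := (uniformD (G.B1p δ.support c)).exists_le_mul_of_support (w := w)
    (fun l => Finset.sum_nonneg fun d _ => G.firstStepWeight_nonneg δ σ _ c d l)
    (by
      rw [support_uniformD hne]
      exact fun l hl => G.sum_firstStepWeight_uniformThen_pos τ hc hl)
  refine G.val_eq_one_of_avoidProb_le_mul (h (uniformThen τ)) hM fun n => ?_
  have hfirst : G.weightedAvoidProb w (shift1 σ [c]) τ n ≤
      G.avoidProb δ σ (uniformThen τ) (n + 1) := by
    rw [weightedAvoidProb_sum, avoidProb_succ]
    exact Finset.single_le_sum (f := fun c' => ∑ d,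
        G.weightedAvoidProb (G.firstStepWeight δ σ (uniformThen τ) c' d) (shift1 σ [c'])
          (shift2 (uniformThen τ) [d]) n)
      (fun c' _ => Finset.sum_nonneg fun d _ =>
        G.weightedAvoidProb_nonneg (G.firstStepWeight_nonneg δ σ _ c' d) _ _ n)
      (Finset.mem_univ c)
  calc G.avoidProb (uniformD (G.B1p δ.support c)) (shift1 σ [c]) τ n
      ≤ M * G.weightedAvoidProb w (shift1 σ [c]) τ n := by
        rw [avoidProb_eq_weightedAvoidProb]
        exact G.weightedAvoidProb_le_mul hle _ τ n
    _ ≤ M * G.avoidProb δ σ (uniformThen τ) n := by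
        gcongr
        exact hfirst.trans (G.avoidProb_succ_le δ σ _ n)

theorem WinsAlmostSurely.last_mem_B1pseq_and_shift1 [Nonempty K] [Nonempty J] {δ : FDist K}
    {σ : Strategy1 I C} (hσ : G.WinsAlmostSurely δ σ) (τ : Strategy2 J D) :
    ∀ (n : ℕ) (h : Hist K C D n), 0 < G.playProb δ σ τ n h →
      (∀ m : Fin (n + 1), m.val < n → h.state m ∉ G.T) →
      h.last ∈ G.B1pseq δ.support h.sig1 ∧
        G.WinsAlmostSurely (uniformD (G.B1pseq δ.support h.sig1)) (shift1 σ h.sig1)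
  | 0, h, hpos, _ => by
    have hsig : h.sig1 = [] := by simp [sig1]
    rw [hsig]
    refine ⟨FDist.mem_support.mpr hpos, hσ.of_support_subset ?_⟩
    rw [B1pseq, List.foldl_nil, support_uniformD δ.support_nonempty]
  | n + 1, h, hpos, hnoT => by
    set x := h.steps (Fin.last n)
    have hinit : 0 < G.playProb δ σ τ n h.init :=
      pos_of_mul_pos_left hpos (G.transProb_nonneg _ _ _ _)
    have hstep : 0 < G.transProb (σ h.init.sig1) (τ h.init.sig2) h.init.last x :=
      pos_of_mul_pos_right hpos (G.playProb_nonneg _ _ _ _ _)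
    obtain ⟨hlast, hwin⟩ := last_mem_B1pseq_and_shift1 hσ τ n h.init hinit fun m hm => by
      rw [state_init]
      exact hnoT m.castSucc (by simpa using hm.trans n.lt_succ_self)
    have hlastT : h.init.last ∉ G.T := by
      rw [last_eq_state, state_init]
      exact hnoT (Fin.last n).castSucc (by simp)
    obtain ⟨hmem, hact⟩ := G.mem_B1p_of_transProb_pos hlast hlastT hstep
    have hsupp := support_uniformD (X := K) ⟨_, hlast⟩
    rw [sig1_eq_init_append, B1pseq_append, shift1_append]
    refine ⟨hmem, ?_⟩
    have hnext := hwin.shift1_B1p (c := x.1) (by simpa [shift1] using hact)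
      (by rw [hsupp]; exact ⟨_, hmem⟩)
    rwa [hsupp] at hnext

end Game

/-- if `σ` is almost-surely winning for player 1 from `δ`, then along
any play of positive probability, either the pessimistic belief of player 1 remains
an almost-surely winning support for player 1, or a target state was visited. -/
theorem pessimistic_belief1_stays_winning (G : Game K I J C D) (δ : FDist K)
    (L : Finset K) (hδ : δ.support = L) (σ : Strategy1 I C)
    (hσ : ∀ τ, G.val δ σ τ = 1) :
    ∀ (τ : Strategy2 J D) (n : ℕ), 1 ≤ n → ∀ h : Hist K C D n,
      0 < G.playProb δ σ τ n h →
      (G.AlmostSureWin1 (uniformD (G.B1pseq L h.sig1)) ∨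
        ∃ m : Fin (n + 1), m.val < n ∧ h.state m ∈ G.T) := by
  intro τ n _ h hpos
  by_cases hvisit : ∃ m : Fin (n + 1), m.val < n ∧ h.state m ∈ G.T
  · exact Or.inr hvisit
  · push Not at hvisit
    subst hδ
    exact Or.inl ⟨_, (Game.WinsAlmostSurely.last_mem_B1pseq_and_shift1 hσ τ n h hpos hvisit).2⟩
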